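/- arXiv:1410.3059 — 2 statements merged into one kernel-verified Lean document; each statement's English description precedes it below -/
import Mathlib

section
/- Let α be a countable set, let m be a σ-algebra of subsets of α, and let μ be a countably additive probability measure defined on m. Then there exists a countably additive probability measure μ' defined on all subsets of α (i.e., on the power-set σ-algebra) such that μ'(S) = μ(S) for every S ∈ m. -/
open MeasureTheory

/-- Every countably additive probability measure on a σ-algebra over a
countable set extends to a countably additive probability measure defined on
all subsets (the power-set σ-algebra). -/
theorem countable_probability_measure_extends_to_powerset
    {α : Type*} [Countable α] (m : MeasurableSpace α)
    (μ : @MeasureTheory.Measure α m)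
    (hμ : @MeasureTheory.IsProbabilityMeasure α m μ) :
    ∃ μ' : @MeasureTheory.Measure α ⊤,
      @MeasureTheory.IsProbabilityMeasure α ⊤ μ' ∧
        ∀ S : Set α, MeasurableSet[m] S → μ' S = μ S := by
  classical
  -- the relation "belongs to the same m-measurable sets"
  set r : α → α → Prop := fun x y => ∀ S : Set α, MeasurableSet[m] S → (x ∈ S ↔ y ∈ S) with hrdef
  have hr_refl : ∀ x, r x x := fun x S _ => Iff.rfl
  have hr_symm : ∀ {x y}, r x y → r y x := fun h S hS => (h S hS).symm
  have hr_trans : ∀ {x y z}, r x y → r y z → r x z := fun h1 h2 S hS => (h1 S hS).trans (h2 S hS)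
  let sd : Setoid α := ⟨r, ⟨hr_refl, fun h => hr_symm h, fun h1 h2 => hr_trans h1 h2⟩⟩
  -- atoms are measurable
  have hatom : ∀ x : α, MeasurableSet[m] {y | r x y} := by
    intro x
    have hsep : ∀ y : α, ¬ r x y → ∃ S : Set α, MeasurableSet[m] S ∧ x ∈ S ∧ y ∉ S := by
      intro y hy
      simp only [hrdef] at hy
      push_neg at hy
      obtain ⟨S, hS, ⟨hx, hyn⟩ | ⟨hx, hyn⟩⟩ := hy
      · exact ⟨S, hS, hx, hyn⟩
      · exact ⟨Sᶜ, hS.compl, hx, by simpa using hyn⟩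
    choose! T hT hxT hyT using hsep
    have heq : {y | r x y} = ⋂ (y : α) (_ : ¬ r x y), T y := by
      ext z
      simp only [Set.mem_iInter, Set.mem_setOf_eq]
      constructor
      · intro hz y hy
        exact (hz (T y) (hT y hy)).mp (hxT y hy)
      · intro hz
        by_contra hc
        exact hyT z hc (hz z hc)
    rw [heq]
    exact MeasurableSet.iInter fun y => MeasurableSet.iInter fun h => hT y h
  -- representative picking function
  let f : α → α := fun x => (Quotient.mk sd x).out
  have hf : ∀ x, r x (f x) := fun x =>
    hr_symm (Quotient.exact (Quotient.out_eq (Quotient.mk sd x)))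
  have hfr : ∀ {x y : α}, r x y → f x = f y := by
    intro x y h
    show (Quotient.mk sd x).out = (Quotient.mk sd y).out
    rw [Quotient.sound (s := sd) h]
  -- f is measurable from m to ⊤
  have hfm : @Measurable α α m ⊤ f := by
    intro T _
    have hsingle : ∀ t : α, MeasurableSet[m] (f ⁻¹' {t}) := by
      intro t
      by_cases ht : ∃ y, f y = t
      · obtain ⟨y, hy⟩ := ht
        have : f ⁻¹' {t} = {z | r t z} := by
          ext z
          simp only [Set.mem_preimage, Set.mem_singleton_iff, Set.mem_setOf_eq]
          constructor
          · intro hz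
            -- f z = t, and r z (f z), so r z t
            exact hr_symm (hz ▸ hf z)
          · intro hz
            -- r t z; also r y t since f y = t and r y (f y)
            have hyt : r y t := hy ▸ hf y
            have : r z y := hr_trans (hr_symm hz) (hr_symm hyt)
            rw [hfr this, hy]
        rw [this]; exact hatom t
      · have : f ⁻¹' {t} = ∅ := by
          ext z
          simp only [Set.mem_preimage, Set.mem_singleton_iff, Set.mem_empty_iff_false, iff_false]
          exact fun hz => ht ⟨z, hz⟩
        rw [this]; exact MeasurableSet.empty
    have : f ⁻¹' T = ⋃ t ∈ T, f ⁻¹' {t} := by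
      ext z; simp
    rw [this]
    exact MeasurableSet.biUnion (Set.to_countable T) fun t _ => hsingle t
  -- extend μ along f
  refine ⟨@Measure.map α α m ⊤ f μ, ?_, ?_⟩
  · exact @Measure.isProbabilityMeasure_map α α m ⊤ μ hμ f (@Measurable.aemeasurable α α m ⊤ f μ hfm)
  · intro S hS
    rw [@Measure.map_apply α α m ⊤ μ f hfm S (MeasurableSpace.measurableSet_top)]
    congr 1
    ext x
    simp only [Set.mem_preimage]
    exact (hf x S hS).symm
end

section
/- Let α be a countable set, let m be a σ-algebra of subsets of α, and let μ be a countably additive probability measure defined on m such that μ(T) ∈ {0, 1} for every T ∈ m. Then there exists a point x ∈ α such that for every T ∈ m, μ(T) = 1 if and only if x ∈ T; that is, μ agrees on m with the Dirac measure concentrated at x. -/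
open MeasureTheory

/-- A {0,1}-valued countably additive probability measure on a σ-algebra over a
countable set agrees on measurable sets with a Dirac measure: there is a point
`x` such that a measurable set has measure 1 exactly when it contains `x`. -/
theorem zero_one_measure_is_dirac_on_countable
    {α : Type*} [Countable α] (m : MeasurableSpace α)
    (μ : @MeasureTheory.Measure α m)
    (hμ : @MeasureTheory.IsProbabilityMeasure α m μ)
    (h01 : ∀ T : Set α, MeasurableSet[m] T → μ T = 0 ∨ μ T = 1) :
    ∃ x : α, ∀ T : Set α, MeasurableSet[m] T → (μ T = 1 ↔ x ∈ T) := by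
  letI := m
  by_cases hx : ∃ x : α, ∀ T : Set α, MeasurableSet[m] T → x ∈ T → μ T = 1
  · obtain ⟨x, hx⟩ := hx
    refine ⟨x, fun T hT => ⟨?_, hx T hT⟩⟩
    intro hT1
    by_contra hxT
    have h2 : μ Tᶜ = 1 := hx Tᶜ hT.compl hxT
    have h3 : μ Tᶜ = 0 := by
      have := measure_compl hT (measure_ne_top μ T)
      rw [hμ.measure_univ, hT1] at this
      simpa using this
    simp [h3] at h2
  · exfalso
    push_neg at hx
    choose T hTm hxT hT1 using hx
    have hzero : ∀ x, μ (T x) = 0 := fun x => (h01 _ (hTm x)).resolve_right (hT1 x)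
    have hcover : (Set.univ : Set α) ⊆ ⋃ x, T x :=
      fun y _ => Set.mem_iUnion.mpr ⟨y, hxT y⟩
    have hle : μ Set.univ ≤ ∑' x, μ (T x) :=
      le_trans (measure_mono hcover) (measure_iUnion_le _)
    simp [hzero, hμ.measure_univ] at hle
end
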